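/- Let R be a unital ring, e an idempotent with qxe = 0 for all x ∈ R, q = 1 - e, and φ₁ a multiplicative Lie derivation with eφ₁(q)q = 0. Suppose δ : R → R agrees with φ₁ on eRe, on qRq, and on eRq, and is defined by δ(x) = φ₁(exe) + φ₁(exq) + φ₁(qxq). Then δ satisfies the multiplicative Lie derivation identity δ([x,y]) = [δ(x),y] + [x,δ(y)] for all x, y ∈ R, provided φ₁(eRe) ⊆ eRe, φ₁(qRq) ⊆ qRq, and φ₁(eRq) ⊆ eRq. -/

import Mathlib

/-! Since `(1 - e) * x * e = 0`, every `x` is the sum `a + m + b` of its corners `a = e x e`,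
`m = e x (1 - e)`, `b = (1 - e) x (1 - e)`. The corners of `⁅x, y⁆` are `⁅a₁, a₂⁆`, `⁅b₁, b₂⁆`
and the sum of the four brackets `⁅a₁, m₂⁆, ⁅m₁, b₂⁆, ⁅m₁, a₂⁆, ⁅b₁, m₂⁆`, all lying in
`e R (1 - e)`, while `⁅a₁, b₂⁆ = ⁅m₁, m₂⁆ = ⁅b₁, a₂⁆ = 0`. As `φ₁` is additive on `e R (1 - e)`,
`δ ⁅x, y⁆` is the sum of `φ₁` over all nine brackets of corners, and summing the Lie derivation
identity over them gives `⁅δ x, y⁆ + ⁅x, δ y⁆`.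

Additivity on `e R (1 - e)` comes from the Lie derivation identity applied to
`m + n = ⁅e + m, n + (1 - e)⁆`, `m = ⁅e + m, 1 - e⁆`, `n = ⁅e, n + (1 - e)⁆` and
`0 = ⁅e, 1 - e⁆`, using that `φ₁` maps `e R (1 - e)` into itself. -/

section

attribute [local instance] LieRing.ofAssociativeRing

variable {R : Type*} [Ring R]

def corner (p r : R) : AddSubgroup R where
  carrier := {u | u = p * u * r}
  zero_mem' := by simp
  add_mem' {u v} (hu : u = _) (hv : v = _) := show u + v = _ by rw [mul_add, add_mul, ← hu, ← hv]
  neg_mem' {u} (hu : u = _) := show -u = _ by rw [mul_neg, neg_mul, ← hu]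

theorem mem_corner {p r u : R} : u ∈ corner p r ↔ u = p * u * r := Iff.rfl

section Corner
variable {p r r' s u v : R}

theorem sandwich_mem_corner (hp : IsIdempotentElem p) (hr : IsIdempotentElem r) (x : R) :
    p * x * r ∈ corner p r := by
  rw [mem_corner, ← mul_assoc, ← mul_assoc, hp.eq, mul_assoc _ r, hr.eq]

theorem left_mul_of_mem_corner (hp : IsIdempotentElem p) (hu : u ∈ corner p r) : p * u = u := by
  rw [hu, ← mul_assoc, ← mul_assoc, hp.eq]

theorem mul_right_of_mem_corner (hr : IsIdempotentElem r) (hu : u ∈ corner p r) : u * r = u := by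
  rw [hu, mul_assoc, hr.eq]

theorem left_mul_eq_zero_of_mem_corner (h : r' * p = 0) (hu : u ∈ corner p r) : r' * u = 0 := by
  rw [hu, ← mul_assoc, ← mul_assoc, h, zero_mul, zero_mul]

theorem mul_right_eq_zero_of_mem_corner (h : r * r' = 0) (hu : u ∈ corner p r) : u * r' = 0 := by
  rw [hu, mul_assoc, h, mul_zero]

theorem mul_eq_zero_of_mem_corner (h : r * r' = 0) (hu : u ∈ corner p r) (hv : v ∈ corner r' s) :
    u * v = 0 := by
  rw [hv, ← mul_assoc, ← mul_assoc, mul_right_eq_zero_of_mem_corner h hu, zero_mul, zero_mul]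

theorem mul_mem_corner (hp : IsIdempotentElem p) (hs : IsIdempotentElem s) (hu : u ∈ corner p r)
    (hv : v ∈ corner r' s) : u * v ∈ corner p s := by
  rw [mem_corner, mul_assoc, mul_assoc, mul_right_of_mem_corner hs hv, ← mul_assoc,
    left_mul_of_mem_corner hp hu]

theorem lie_eq_mul_of_mem_corner (h : s * p = 0) (hu : u ∈ corner p r) (hv : v ∈ corner r' s) :
    ⁅u, v⁆ = u * v := by
  rw [Ring.lie_def, mul_eq_zero_of_mem_corner h hv hu, sub_zero]

theorem lie_eq_neg_mul_of_mem_corner (h : r * r' = 0) (hu : u ∈ corner p r)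
    (hv : v ∈ corner r' s) : ⁅u, v⁆ = -(v * u) := by
  rw [Ring.lie_def, mul_eq_zero_of_mem_corner h hu hv, zero_sub]

theorem lie_eq_zero_of_mem_corner (h : r * r' = 0) (h' : s * p = 0) (hu : u ∈ corner p r)
    (hv : v ∈ corner r' s) : ⁅u, v⁆ = 0 := by
  rw [lie_eq_mul_of_mem_corner h' hu hv, mul_eq_zero_of_mem_corner h hu hv]

theorem lie_mem_corner (hp : IsIdempotentElem p) (hs : IsIdempotentElem s) (h : s * p = 0)
    (hu : u ∈ corner p r) (hv : v ∈ corner r' s) : ⁅u, v⁆ ∈ corner p s := by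
  rw [lie_eq_mul_of_mem_corner h hu hv]
  exact mul_mem_corner hp hs hu hv

end Corner

theorem sandwich_lie (p r x y : R) : p * ⁅x, y⁆ * r = p * (x * y) * r - p * (y * x) * r := by
  rw [Ring.lie_def]
  noncomm_ring

theorem IsIdempotentElem.sandwich_mul_eq {e : R} (he : IsIdempotentElem e) (p r x y : R) :
    p * (x * y) * r = p * x * e * (e * y * r) + p * x * (1 - e) * ((1 - e) * y * r) := by
  calc p * (x * y) * r = p * x * (e * e) * y * r + p * x * ((1 - e) * (1 - e)) * y * r := by
        rw [he.eq, he.one_sub.eq]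
        noncomm_ring
    _ = p * x * e * (e * y * r) + p * x * (1 - e) * ((1 - e) * y * r) := by noncomm_ring

section OffDiagonal
variable {e u v : R}

theorem lie_idem_of_mem_corner (he : IsIdempotentElem e) (hu : u ∈ corner e (1 - e)) :
    ⁅e, u⁆ = u := by
  rw [Ring.lie_def, left_mul_of_mem_corner he hu,
    mul_right_eq_zero_of_mem_corner he.one_sub_mul_self hu, sub_zero]

theorem lie_one_sub_of_mem_corner (he : IsIdempotentElem e) (hu : u ∈ corner e (1 - e)) :
    ⁅u, 1 - e⁆ = u := by
  rw [Ring.lie_def, mul_right_of_mem_corner he.one_sub hu,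
    left_mul_eq_zero_of_mem_corner he.one_sub_mul_self hu, sub_zero]

theorem lie_eq_zero_of_mem_corner_one_sub (he : IsIdempotentElem e) (hu : u ∈ corner e (1 - e))
    (hv : v ∈ corner e (1 - e)) : ⁅u, v⁆ = 0 :=
  lie_eq_zero_of_mem_corner he.one_sub_mul_self he.one_sub_mul_self hu hv

theorem lie_idem_add_of_mem_corner (he : IsIdempotentElem e) (hu : u ∈ corner e (1 - e))
    (hv : v ∈ corner e (1 - e)) : ⁅e + u, v⁆ = v := by
  rw [add_lie, lie_idem_of_mem_corner he hv, lie_eq_zero_of_mem_corner_one_sub he hu hv, add_zero]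

theorem lie_add_one_sub_of_mem_corner (he : IsIdempotentElem e) (hu : u ∈ corner e (1 - e))
    (hv : v ∈ corner e (1 - e)) : ⁅u, v + (1 - e)⁆ = u := by
  rw [lie_add, lie_eq_zero_of_mem_corner_one_sub he hu hv, lie_one_sub_of_mem_corner he hu,
    zero_add]

end OffDiagonal

theorem sandwich_add_sandwich_add_sandwich {e : R} (htri : ∀ x : R, (1 - e) * x * e = 0)
    (x : R) : e * x * e + e * x * (1 - e) + (1 - e) * x * (1 - e) = x := by
  linear_combination (norm := noncomm_ring) -htri x

theorem sandwich_lie_ee {e : R} (he : IsIdempotentElem e) (htri : ∀ x : R, (1 - e) * x * e = 0)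
    (x y : R) : e * ⁅x, y⁆ * e = ⁅e * x * e, e * y * e⁆ := by
  rw [sandwich_lie, he.sandwich_mul_eq, he.sandwich_mul_eq, htri, htri, Ring.lie_def]
  noncomm_ring

theorem sandwich_lie_qq {e : R} (he : IsIdempotentElem e) (htri : ∀ x : R, (1 - e) * x * e = 0)
    (x y : R) :
    (1 - e) * ⁅x, y⁆ * (1 - e) = ⁅(1 - e) * x * (1 - e), (1 - e) * y * (1 - e)⁆ := by
  rw [sandwich_lie, he.sandwich_mul_eq, he.sandwich_mul_eq, htri, htri, Ring.lie_def]
  noncomm_ring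

theorem sandwich_lie_offDiag {e : R} (he : IsIdempotentElem e) (x y : R) :
    e * ⁅x, y⁆ * (1 - e) =
      ⁅e * x * e, e * y * (1 - e)⁆ + ⁅e * x * (1 - e), (1 - e) * y * (1 - e)⁆
        + ⁅e * x * (1 - e), e * y * e⁆ + ⁅(1 - e) * x * (1 - e), e * y * (1 - e)⁆ := by
  have hq := he.one_sub
  have hqe := he.one_sub_mul_self
  rw [sandwich_lie, he.sandwich_mul_eq, he.sandwich_mul_eq,
    lie_eq_mul_of_mem_corner hqe (sandwich_mem_corner he he x) (sandwich_mem_corner he hq y),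
    lie_eq_mul_of_mem_corner hqe (sandwich_mem_corner he hq x) (sandwich_mem_corner hq hq y),
    lie_eq_neg_mul_of_mem_corner hqe (sandwich_mem_corner he hq x) (sandwich_mem_corner he he y),
    lie_eq_neg_mul_of_mem_corner hqe (sandwich_mem_corner hq hq x) (sandwich_mem_corner he hq y)]
  abel

def IsMulLieDerivation (φ : R → R) : Prop :=
  ∀ x y : R, φ ⁅x, y⁆ = ⁅φ x, y⁆ + ⁅x, φ y⁆

def cornerSum (φ : R → R) (e x : R) : R :=
  φ (e * x * e) + φ (e * x * (1 - e)) + φ ((1 - e) * x * (1 - e))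

namespace IsMulLieDerivation

variable {φ : R → R} (hφ : IsMulLieDerivation φ)
include hφ

theorem map_lie (x y : R) : φ ⁅x, y⁆ = ⁅φ x, y⁆ + ⁅x, φ y⁆ :=
  hφ x y

theorem map_zero : φ 0 = 0 := by
  simpa [Ring.lie_def] using hφ 0 0

theorem lie_map_left_eq_zero {u v : R} (h : ⁅u, v⁆ = v) (h' : ⁅u, φ v⁆ = φ v) : ⁅φ u, v⁆ = 0 := by
  simpa [h, h'] using hφ u v

theorem lie_map_right_eq_zero {u v : R} (h : ⁅u, v⁆ = u) (h' : ⁅φ u, v⁆ = φ u) : ⁅u, φ v⁆ = 0 := by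
  simpa [h, h'] using hφ u v

theorem map_add_of_mem_corner {e : R} (he : IsIdempotentElem e)
    (hmaps : Set.MapsTo φ (corner e (1 - e)) (corner e (1 - e))) {m n : R}
    (hm : m ∈ corner e (1 - e)) (hn : n ∈ corner e (1 - e)) : φ (m + n) = φ m + φ n := by
  have hφm := hmaps hm
  have hφn := hmaps hn
  have he_q : ⁅e, 1 - e⁆ = 0 := by
    rw [Ring.lie_def, he.mul_one_sub_self, he.one_sub_mul_self, sub_zero]
  have hm_eq : ⁅e + m, 1 - e⁆ = m := by
    rw [add_lie, he_q, lie_one_sub_of_mem_corner he hm, zero_add]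
  have hn_eq : ⁅e, n + (1 - e)⁆ = n := by
    rw [lie_add, he_q, lie_idem_of_mem_corner he hn, add_zero]
  have hmn_eq : ⁅e + m, n + (1 - e)⁆ = m + n := by
    rw [lie_add, hm_eq, lie_idem_add_of_mem_corner he hm hn, add_comm]
  have h₁ : ⁅φ (e + m), n⁆ = 0 := hφ.lie_map_left_eq_zero
    (lie_idem_add_of_mem_corner he hm hn) (lie_idem_add_of_mem_corner he hm hφn)
  have h₂ : ⁅φ e, n⁆ = 0 :=
    hφ.lie_map_left_eq_zero (lie_idem_of_mem_corner he hn) (lie_idem_of_mem_corner he hφn)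
  have h₃ : ⁅m, φ (n + (1 - e))⁆ = 0 := hφ.lie_map_right_eq_zero
    (lie_add_one_sub_of_mem_corner he hm hn) (lie_add_one_sub_of_mem_corner he hφm hn)
  have h₄ : ⁅m, φ (1 - e)⁆ = 0 :=
    hφ.lie_map_right_eq_zero (lie_one_sub_of_mem_corner he hm) (lie_one_sub_of_mem_corner he hφm)
  have h₀ : ⁅φ e, 1 - e⁆ + ⁅e, φ (1 - e)⁆ = 0 := by rw [← hφ, he_q, hφ.map_zero]
  calc φ (m + n) = ⁅φ (e + m), n + (1 - e)⁆ + ⁅e + m, φ (n + (1 - e))⁆ := by rw [← hφ, hmn_eq]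
    _ = ⁅φ (e + m), 1 - e⁆ + ⁅e, φ (n + (1 - e))⁆ := by
      rw [lie_add, add_lie, h₁, h₃]
      abel
    _ = (⁅φ (e + m), 1 - e⁆ + ⁅e + m, φ (1 - e)⁆)
          + (⁅φ e, n + (1 - e)⁆ + ⁅e, φ (n + (1 - e))⁆) := by
      rw [add_lie, lie_add, h₄, h₂]
      linear_combination (norm := abel) -h₀
    _ = φ m + φ n := by rw [← hφ, ← hφ, hm_eq, hn_eq]

theorem map_sandwich_lie_offDiag {e : R} (he : IsIdempotentElem e)
    (hmaps : Set.MapsTo φ (corner e (1 - e)) (corner e (1 - e))) (x y : R) :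
    φ (e * ⁅x, y⁆ * (1 - e)) =
      φ ⁅e * x * e, e * y * (1 - e)⁆ + φ ⁅e * x * (1 - e), (1 - e) * y * (1 - e)⁆
        + φ ⁅e * x * (1 - e), e * y * e⁆ + φ ⁅(1 - e) * x * (1 - e), e * y * (1 - e)⁆ := by
  have hq := he.one_sub
  have hqe := he.one_sub_mul_self
  have h₁ := lie_mem_corner he hq hqe (sandwich_mem_corner he he x) (sandwich_mem_corner he hq y)
  have h₂ := lie_mem_corner he hq hqe (sandwich_mem_corner he hq x) (sandwich_mem_corner hq hq y)
  have h₃ := lie_skew (e * x * (1 - e)) (e * y * e) ▸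
    neg_mem (lie_mem_corner he hq hqe (sandwich_mem_corner he he y) (sandwich_mem_corner he hq x))
  have h₄ := lie_skew ((1 - e) * x * (1 - e)) (e * y * (1 - e)) ▸
    neg_mem (lie_mem_corner he hq hqe (sandwich_mem_corner he hq y) (sandwich_mem_corner hq hq x))
  rw [sandwich_lie_offDiag he, hφ.map_add_of_mem_corner he hmaps (add_mem (add_mem h₁ h₂) h₃) h₄,
    hφ.map_add_of_mem_corner he hmaps (add_mem h₁ h₂) h₃, hφ.map_add_of_mem_corner he hmaps h₁ h₂]

end IsMulLieDerivation

theorem isMulLieDerivation_cornerSum {φ : R → R} (hφ : IsMulLieDerivation φ) {e : R}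
    (he : IsIdempotentElem e) (htri : ∀ x : R, (1 - e) * x * e = 0)
    (hmaps : Set.MapsTo φ (corner e (1 - e)) (corner e (1 - e))) :
    IsMulLieDerivation (cornerSum φ e) := by
  intro x y
  have hq := he.one_sub
  have hqe := he.one_sub_mul_self
  have hx := sandwich_add_sandwich_add_sandwich htri x
  have hy := sandwich_add_sandwich_add_sandwich htri y
  have hee := sandwich_lie_ee he htri x y
  have hqq := sandwich_lie_qq he htri x y
  have hem := hφ.map_sandwich_lie_offDiag he hmaps x y
  set a₁ := e * x * e
  set m₁ := e * x * (1 - e)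
  set b₁ := (1 - e) * x * (1 - e)
  set a₂ := e * y * e
  set m₂ := e * y * (1 - e)
  set b₂ := (1 - e) * y * (1 - e)
  have hzero : φ ⁅a₁, b₂⁆ + φ ⁅m₁, m₂⁆ + φ ⁅b₁, a₂⁆ = 0 := by
    rw [lie_eq_zero_of_mem_corner he.mul_one_sub_self hqe (sandwich_mem_corner he he x)
        (sandwich_mem_corner hq hq y),
      lie_eq_zero_of_mem_corner_one_sub he (sandwich_mem_corner he hq x)
        (sandwich_mem_corner he hq y),
      lie_eq_zero_of_mem_corner hqe he.mul_one_sub_self (sandwich_mem_corner hq hq x)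
        (sandwich_mem_corner he he y), hφ.map_zero, add_zero, add_zero]
  calc cornerSum φ e ⁅x, y⁆
      = φ ⁅a₁, a₂⁆ + (φ ⁅a₁, m₂⁆ + φ ⁅m₁, b₂⁆ + φ ⁅m₁, a₂⁆ + φ ⁅b₁, m₂⁆) + φ ⁅b₁, b₂⁆ := by
        rw [cornerSum, hee, hem, hqq]
    _ = φ ⁅a₁, a₂⁆ + φ ⁅a₁, m₂⁆ + φ ⁅a₁, b₂⁆ + (φ ⁅m₁, a₂⁆ + φ ⁅m₁, m₂⁆ + φ ⁅m₁, b₂⁆)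
          + (φ ⁅b₁, a₂⁆ + φ ⁅b₁, m₂⁆ + φ ⁅b₁, b₂⁆) := by
        linear_combination (norm := abel) -hzero
    _ = ⁅φ a₁ + φ m₁ + φ b₁, a₂ + m₂ + b₂⁆ + ⁅a₁ + m₁ + b₁, φ a₂ + φ m₂ + φ b₂⁆ := by
        simp only [hφ.map_lie, add_lie, lie_add]
        abel
    _ = ⁅cornerSum φ e x, y⁆ + ⁅x, cornerSum φ e y⁆ := by rw [hx, hy]; rfl

end

theorem corner_sum_is_mult_lie_derivation_general (R : Type*) [Ring R] (e : R) (he : e * e = e)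
    (htri : ∀ x : R, (1 - e) * x * e = 0) (φ₁ : R → R)
    (hφ : ∀ x y : R, φ₁ (x * y - y * x) = φ₁ x * y - y * φ₁ x + (x * φ₁ y - φ₁ y * x))
    (hcorner_m : ∀ x : R, φ₁ (e * x * (1 - e)) = e * φ₁ (e * x * (1 - e)) * (1 - e))
    (δ : R → R)
    (hδ : ∀ x : R, δ x = φ₁ (e * x * e) + φ₁ (e * x * (1 - e)) + φ₁ ((1 - e) * x * (1 - e))) :
    ∀ x y : R, δ (x * y - y * x) = δ x * y - y * δ x + (x * δ y - δ y * x) := by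
  have hφ' : IsMulLieDerivation φ₁ := fun x y => by simpa only [Ring.lie_def] using hφ x y
  have hmaps : Set.MapsTo φ₁ (corner e (1 - e)) (corner e (1 - e)) := fun m (hm : m = _) => by
    rw [hm]
    exact hcorner_m m
  obtain rfl : δ = cornerSum φ₁ e := funext hδ
  intro x y
  simpa only [Ring.lie_def] using isMulLieDerivation_cornerSum hφ' he htri hmaps x y

theorem corner_sum_is_mult_lie_derivation (R : Type*) [Ring R] (e : R) (he : e * e = e)
    (htri : ∀ x : R, (1 - e) * x * e = 0) (φ₁ : R → R)
    (hφ : ∀ x y : R, φ₁ (x * y - y * x) = φ₁ x * y - y * φ₁ x + (x * φ₁ y - φ₁ y * x))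
    (h0 : e * φ₁ (1 - e) * (1 - e) = 0)
    (hcorner_e : ∀ x : R, φ₁ (e * x * e) = e * φ₁ (e * x * e) * e)
    (hcorner_q : ∀ x : R, φ₁ ((1 - e) * x * (1 - e)) = (1 - e) * φ₁ ((1 - e) * x * (1 - e)) * (1 - e))
    (hcorner_m : ∀ x : R, φ₁ (e * x * (1 - e)) = e * φ₁ (e * x * (1 - e)) * (1 - e))
    (hadd_e : ∀ a a' : R, a = e * a * e → a' = e * a' * e → φ₁ (a + a') = φ₁ a + φ₁ a')
    (hadd_q : ∀ b b' : R, b = (1 - e) * b * (1 - e) → b' = (1 - e) * b' * (1 - e) →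
      φ₁ (b + b') = φ₁ b + φ₁ b')
    (δ : R → R)
    (hδ : ∀ x : R, δ x = φ₁ (e * x * e) + φ₁ (e * x * (1 - e)) + φ₁ ((1 - e) * x * (1 - e))) :
    ∀ x y : R, δ (x * y - y * x) = δ x * y - y * δ x + (x * δ y - δ y * x) :=
  corner_sum_is_mult_lie_derivation_general R e he htri φ₁ hφ hcorner_m δ hδ
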